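/- arXiv:2311.02483 — 2 statements merged into one kernel-verified Lean document; each statement's English description precedes it below -/
import Mathlib

section
/- In a quantum-Wajsberg algebra, x ⊓ y ≤_Q x → y and y ⊓ x ≤_Q x → y for all x, y. -/
class InvBEAlgebra (X : Type*) extends One X, Zero X where
  imp : X → X → X
  imp_self : ∀ x : X, imp x x = 1
  imp_one : ∀ x : X, imp x 1 = 1
  one_imp : ∀ x : X, imp 1 x = x
  exchange : ∀ x y z : X, imp x (imp y z) = imp y (imp x z)
  zero_imp : ∀ x : X, imp 0 x = 1
  involutive : ∀ x : X, imp (imp x 0) 0 = x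

namespace InvBEAlgebra

variable {X : Type*} [InvBEAlgebra X]

def star (x : X) : X := imp x 0

def inf (x y : X) : X := star (imp (imp (star x) (star y)) (star y))

def sup (x y : X) : X := imp (imp x y) y

def odot (x y : X) : X := star (imp x (star y))

def leQ (x y : X) : Prop := x = inf x y

end InvBEAlgebra

class QWAlgebra (X : Type*) extends InvBEAlgebra X where
  qw : ∀ x y z : X, imp x (InvBEAlgebra.inf (InvBEAlgebra.inf x y) (InvBEAlgebra.inf z x)) =
        InvBEAlgebra.inf (imp x y) (imp x z)

open InvBEAlgebra

section Aux

variable {X : Type*} [InvBEAlgebra X]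

lemma aux_star_star (x : X) : star (star x) = x := involutive x

lemma aux_contrap (x y : X) : imp x (star y) = imp y (star x) := exchange x y 0

lemma aux_imp_eq (x y : X) : imp x y = imp (star y) (star x) := by
  conv_lhs => rw [← aux_star_star y]
  exact aux_contrap x (star y)

lemma aux_inf_one (x : X) : inf x 1 = x := by
  simp only [inf, InvBEAlgebra.star, one_imp, involutive]

lemma aux_one_inf (x : X) : inf 1 x = x := by
  simp only [inf, InvBEAlgebra.star, one_imp, zero_imp, involutive]

lemma aux_inf_zero (x : X) : inf x 0 = 0 := by
  simp only [inf, InvBEAlgebra.star, zero_imp, imp_one, one_imp]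

lemma aux_zero_inf (x : X) : inf 0 x = 0 := by
  simp only [inf, InvBEAlgebra.star, zero_imp, one_imp, InvBEAlgebra.imp_self]

/-- If w ≤ x (naturally), then x ⊓ w = w. -/
lemma aux_inf_absorb {x w : X} (h : imp w x = 1) : inf x w = w := by
  unfold inf
  have h1 : imp (star x) (star w) = 1 := by
    rw [aux_contrap, aux_star_star, h]
  rw [h1, one_imp, aux_star_star]

lemma aux_le (x y : X) : imp (inf y x) x = 1 := by
  rw [aux_imp_eq]
  have h : star (inf y x) = imp (imp (star y) (star x)) (star x) := by
    unfold inf; rw [aux_star_star]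
  rw [h, exchange, InvBEAlgebra.imp_self, imp_one]

end Aux

section QWAux

variable {X : Type*} [QWAlgebra X]

lemma aux_q1 (x y : X) : imp x (inf (inf x y) x) = imp x y := by
  have h := QWAlgebra.qw x y 1
  rwa [aux_one_inf, imp_one, aux_inf_one] at h

lemma aux_q2 (x u : X) : imp x (inf x (inf u x)) = imp x u := by
  have h := QWAlgebra.qw x 1 u
  rwa [aux_inf_one, imp_one, aux_one_inf] at h

lemma aux_q4 (u z : X) : inf (star u) (imp u z) = star u := by
  have h := QWAlgebra.qw u 0 z
  rw [aux_inf_zero, aux_zero_inf] at h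
  -- h : imp u 0 = inf (imp u 0) (imp u z), with imp u 0 = star u definitionally
  unfold InvBEAlgebra.star
  exact h.symm

lemma aux_key (x u : X) : imp x (inf u x) = imp x u := by
  have h1 : inf x (inf u x) = inf u x := aux_inf_absorb (aux_le x u)
  have h2 := aux_q2 x u
  rwa [h1] at h2

lemma aux_L' (x y : X) : imp x (inf x y) = imp x y := by
  rw [← aux_key x (inf x y)]
  exact aux_q1 x y

end QWAux

theorem stmt10 {X : Type*} [QWAlgebra X] (x y : X) :
    leQ (inf x y) (imp x y) ∧ leQ (inf y x) (imp x y) := by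
  constructor
  · -- inf x y = inf (inf x y) (imp x y)
    have h := aux_q4 (star (inf x y)) (star x)
    rw [aux_star_star] at h
    have h2 : imp (star (inf x y)) (star x) = imp x y := by
      rw [aux_contrap, aux_star_star, aux_L']
    rw [h2] at h
    exact h.symm
  · have h := aux_q4 (star (inf y x)) (star x)
    rw [aux_star_star] at h
    have h2 : imp (star (inf y x)) (star x) = imp x y := by
      rw [aux_contrap, aux_star_star, aux_key]
    rw [h2] at h
    exact h.symm
end

section
/- In a quantum-Wajsberg algebra, the set O(X) = {x : x = x* → x} is closed under * and under →. -/
open InvBEAlgebra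

section Aux

variable {X : Type*}

lemma my_star_star [InvBEAlgebra X] (x : X) : star (star x) = x := involutive x

lemma my_star_one [InvBEAlgebra X] : star (1 : X) = 0 := one_imp 0

lemma my_star_zero [InvBEAlgebra X] : star (0 : X) = 1 := zero_imp 0

lemma my_contrap [InvBEAlgebra X] (a b : X) :
    imp a b = imp (imp b 0) (imp a 0) := by
  conv_lhs => rw [← involutive b]
  rw [exchange]

lemma my_contrap' [InvBEAlgebra X] (a b : X) :
    imp (imp a 0) b = imp (imp b 0) a := by
  rw [my_contrap (imp a 0) b, involutive]

lemma my_key_raw [InvBEAlgebra X] (x y : X) :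
    imp (imp (imp (imp x 0) y) 0) (imp (imp x 0) y)
      = imp (imp (imp (imp x 0) x) 0) (imp (imp y 0) y) := by
  have hL : imp (imp (imp (imp x 0) y) 0) (imp (imp x 0) y)
      = imp (imp x 0) (imp (imp y 0) (imp (imp y 0) x)) := by
    rw [exchange (imp (imp (imp x 0) y) 0) (imp x 0) y,
      my_contrap' (imp (imp x 0) y) y, my_contrap' x y]
  have hR : imp (imp (imp (imp x 0) x) 0) (imp (imp y 0) y)
      = imp (imp x 0) (imp (imp y 0) (imp (imp y 0) x)) := by
    rw [exchange (imp (imp (imp x 0) x) 0) (imp y 0) y,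
      my_contrap' (imp (imp x 0) x) y,
      exchange (imp y 0) (imp x 0) x,
      exchange (imp y 0) (imp x 0) (imp (imp y 0) x)]
  rw [hL, hR]

lemma my_key [InvBEAlgebra X] (x y : X) :
    imp (star (imp (star x) y)) (imp (star x) y)
      = imp (star (imp (star x) x)) (imp (star y) y) := my_key_raw x y

lemma my_one_inf [InvBEAlgebra X] (x : X) : inf 1 x = x := by
  show star (imp (imp (star (1 : X)) (star x)) (star x)) = x
  rw [my_star_one, zero_imp, one_imp, my_star_star]

lemma my_inf_one [InvBEAlgebra X] (x : X) : inf x 1 = x := by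
  show star (imp (imp (star x) (star (1 : X))) (star (1 : X))) = x
  rw [my_star_one, involutive, my_star_star]

lemma my_mem_star [QWAlgebra X] {x : X} (h : x = imp (star x) x) :
    imp x (star x) = star x := by
  have h1 : inf x (star x) = (0 : X) := by
    show star (imp (imp (star x) (star (star x))) (star (star x))) = 0
    rw [my_star_star x, ← h, InvBEAlgebra.imp_self]
    exact one_imp 0
  have h2 : inf (0 : X) x = 0 := by
    show star (imp (imp (star (0 : X)) (star x)) (star x)) = 0
    rw [my_star_zero, one_imp, InvBEAlgebra.imp_self]
    exact one_imp 0
  have hq := QWAlgebra.qw x (star x) 1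
  rw [h1, my_one_inf, h2, imp_one, my_inf_one] at hq
  exact hq.symm

end Aux

theorem stmt17 {X : Type*} [QWAlgebra X] :
    (∀ x : X, x = imp (star x) x → star x = imp (star (star x)) (star x)) ∧
    (∀ x y : X, x = imp (star x) x → y = imp (star y) y →
      imp x y = imp (star (imp x y)) (imp x y)) := by
  constructor
  · intro x h
    rw [my_star_star]
    exact (my_mem_star h).symm
  · intro x y hx hy
    have k := my_key (star x) y
    rw [my_star_star x] at k
    rw [my_mem_star hx] at k
    rw [my_star_star x] at k
    rw [← hy] at k
    exact k.symm
end
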